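/- arXiv:1903.09680 — 6 statements merged into one kernel-verified Lean document; each statement's English description precedes it below -/
import Mathlib

section
/- Let W : ℝ≥0² → ℝ≥0 be twice continuously differentiable with ∂²W/∂u² > 0, ∂²W/∂v² > 0, ∂²W/∂u∂v ≥ 0 on the nonnegative quadrant, and suppose W(u,v) → ∞ as u+v → ∞. Then there exist constants ū, v̄ ≥ 0 such that ∂W/∂u(u,v) > 0 for all u ≥ ū and all v ≥ 0, and ∂W/∂v(u,v) > 0 for all v ≥ v̄ and all u ≥ 0. -/
/-!
Take `a > 0` so large that `W a 0` and `W 0 a` exceed `W 0 0`. By the mean value theorem `∂W/∂u` is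
positive somewhere on `(0, a) × {0}`; since `∂W/∂u` is nondecreasing in both variables, it stays
positive on `[a, ∞) × [0, ∞)`. For `∂W/∂v`, the nonnegative mixed partial makes
`u ↦ W u a - W u 0` nondecreasing, so `W u a > W u 0` for every `u ≥ 0`, and the same mean value
argument in `v`, with `∂W/∂v` nondecreasing in `v`, applies on every vertical line.
-/

open Set

lemma monotoneOn_Ici_of_hasDerivAt_nonneg {f f' : ℝ → ℝ} {a : ℝ}
    (hf : ∀ x, a ≤ x → HasDerivAt f (f' x) x) (hf' : ∀ x, a ≤ x → 0 ≤ f' x) :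
    MonotoneOn f (Ici a) :=
  monotoneOn_of_hasDerivWithinAt_nonneg (convex_Ici a)
    (fun x hx => (hf x hx).continuousAt.continuousWithinAt)
    (fun x hx => (hf x (interior_subset hx)).hasDerivWithinAt)
    (fun x hx => hf' x (interior_subset hx))

lemma MonotoneOn.pos_of_hasDerivAt_of_lt {f f' : ℝ → ℝ} {a b : ℝ} (hf' : MonotoneOn f' (Ici a))
    (hab : a < b) (hf : ∀ x, a ≤ x → HasDerivAt f (f' x) x) (hlt : f a < f b) :
    ∀ x, b ≤ x → 0 < f' x := by
  obtain ⟨c, ⟨hac, hcb⟩, hc⟩ := exists_hasDerivAt_eq_slope f f' hab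
    (fun x hx => (hf x hx.1).continuousAt.continuousWithinAt) (fun x hx => hf x hx.1.le)
  have hc_pos : 0 < f' c := hc ▸ div_pos (sub_pos.2 hlt) (sub_pos.2 hab)
  intro x hbx
  exact hc_pos.trans_le (hf' hac.le (hab.le.trans hbx) (hcb.le.trans hbx))

section Quadrant

variable {W Wu Wv : ℝ → ℝ → ℝ}
  (hWu : ∀ u v, 0 ≤ u → 0 ≤ v → HasDerivAt (fun x => W x v) (Wu u v) u)
  (hWu_mono_v : ∀ u, 0 ≤ u → MonotoneOn (fun y => Wu u y) (Ici 0))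

include hWu hWu_mono_v

lemma partialU_pos_of_lt (hWu_mono_u : ∀ v, 0 ≤ v → MonotoneOn (fun x => Wu x v) (Ici 0))
    {a : ℝ} (ha : 0 < a) (hWa : W 0 0 < W a 0) :
    ∀ u v, a ≤ u → 0 ≤ v → 0 < Wu u v := by
  intro u v hau hv
  have hu : 0 ≤ u := ha.le.trans hau
  have hu0 : 0 < Wu u 0 :=
    (hWu_mono_u 0 le_rfl).pos_of_hasDerivAt_of_lt ha (fun x hx => hWu x 0 hx le_rfl) hWa u hau
  exact hu0.trans_le (hWu_mono_v u hu self_mem_Ici hv hv)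

lemma partialV_pos_of_lt (hWv : ∀ u v, 0 ≤ u → 0 ≤ v → HasDerivAt (fun y => W u y) (Wv u v) v)
    (hWv_mono_v : ∀ u, 0 ≤ u → MonotoneOn (fun y => Wv u y) (Ici 0))
    {a : ℝ} (ha : 0 < a) (hWa : W 0 0 < W 0 a) :
    ∀ u v, 0 ≤ u → a ≤ v → 0 < Wv u v := by
  intro u v hu hav
  have hdiff_mono : MonotoneOn (fun x => W x a - W x 0) (Ici 0) :=
    monotoneOn_Ici_of_hasDerivAt_nonneg (fun x hx => (hWu x a hx ha.le).sub (hWu x 0 hx le_rfl))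
      (fun x hx => sub_nonneg.2 (hWu_mono_v x hx self_mem_Ici ha.le ha.le))
  have hWua : W u 0 < W u a := by
    have := hdiff_mono self_mem_Ici (mem_Ici.2 hu) hu
    simp only at this
    linarith
  exact (hWv_mono_v u hu).pos_of_hasDerivAt_of_lt ha (fun y hy => hWv u y hu hy) hWua v hav

end Quadrant

theorem stmt1_general
    (W Wu Wv Wuu Wvv Wuv : ℝ → ℝ → ℝ)
    (hWu : ∀ u v : ℝ, 0 ≤ u → 0 ≤ v → HasDerivAt (fun x => W x v) (Wu u v) u)
    (hWv : ∀ u v : ℝ, 0 ≤ u → 0 ≤ v → HasDerivAt (fun y => W u y) (Wv u v) v)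
    (hWuu : ∀ u v : ℝ, 0 ≤ u → 0 ≤ v → HasDerivAt (fun x => Wu x v) (Wuu u v) u)
    (hWvv : ∀ u v : ℝ, 0 ≤ u → 0 ≤ v → HasDerivAt (fun y => Wv u y) (Wvv u v) v)
    (hWuv : ∀ u v : ℝ, 0 ≤ u → 0 ≤ v → HasDerivAt (fun y => Wu u y) (Wuv u v) v)
    (hpuu : ∀ u v : ℝ, 0 ≤ u → 0 ≤ v → 0 < Wuu u v)
    (hpvv : ∀ u v : ℝ, 0 ≤ u → 0 ≤ v → 0 < Wvv u v)
    (hpuv : ∀ u v : ℝ, 0 ≤ u → 0 ≤ v → 0 ≤ Wuv u v)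
    (hrad : ∀ C : ℝ, ∃ R : ℝ, ∀ u v : ℝ, 0 ≤ u → 0 ≤ v → R ≤ u + v → C ≤ W u v) :
    ∃ ubar vbar : ℝ, 0 ≤ ubar ∧ 0 ≤ vbar ∧
      (∀ u v : ℝ, ubar ≤ u → 0 ≤ v → 0 < Wu u v) ∧
      (∀ u v : ℝ, 0 ≤ u → vbar ≤ v → 0 < Wv u v) := by
  obtain ⟨R, hR⟩ := hrad (W 0 0 + 1)
  set a := max R 1
  have ha : 0 < a := one_pos.trans_le (le_max_right R 1)
  have hWa0 : W 0 0 < W a 0 := by linarith [hR a 0 ha.le le_rfl (by simp [a])]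
  have hW0a : W 0 0 < W 0 a := by linarith [hR 0 a le_rfl ha.le (by simp [a])]
  have hWu_mono_u : ∀ v, 0 ≤ v → MonotoneOn (fun x => Wu x v) (Ici 0) := fun v hv =>
    monotoneOn_Ici_of_hasDerivAt_nonneg (fun x hx => hWuu x v hx hv) fun x hx => (hpuu x v hx hv).le
  have hWu_mono_v : ∀ u, 0 ≤ u → MonotoneOn (fun y => Wu u y) (Ici 0) := fun u hu =>
    monotoneOn_Ici_of_hasDerivAt_nonneg (fun y hy => hWuv u y hu hy) fun y hy => hpuv u y hu hy
  have hWv_mono_v : ∀ u, 0 ≤ u → MonotoneOn (fun y => Wv u y) (Ici 0) := fun u hu =>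
    monotoneOn_Ici_of_hasDerivAt_nonneg (fun y hy => hWvv u y hu hy) fun y hy => (hpvv u y hu hy).le
  exact ⟨a, a, ha.le, ha.le, partialU_pos_of_lt hWu hWu_mono_v hWu_mono_u ha hWa0,
    partialV_pos_of_lt hWu hWu_mono_v hWv hWv_mono_v ha hW0a⟩

/-- a C² convex radially-unbounded function on the quadrant has
eventually positive partial derivatives. -/
theorem stmt1
    (W Wu Wv Wuu Wvv Wuv : ℝ → ℝ → ℝ)
    (hWnn : ∀ u v : ℝ, 0 ≤ u → 0 ≤ v → 0 ≤ W u v)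
    (hWu : ∀ u v : ℝ, 0 ≤ u → 0 ≤ v → HasDerivAt (fun x => W x v) (Wu u v) u)
    (hWv : ∀ u v : ℝ, 0 ≤ u → 0 ≤ v → HasDerivAt (fun y => W u y) (Wv u v) v)
    (hWuu : ∀ u v : ℝ, 0 ≤ u → 0 ≤ v → HasDerivAt (fun x => Wu x v) (Wuu u v) u)
    (hWvv : ∀ u v : ℝ, 0 ≤ u → 0 ≤ v → HasDerivAt (fun y => Wv u y) (Wvv u v) v)
    (hWuv : ∀ u v : ℝ, 0 ≤ u → 0 ≤ v → HasDerivAt (fun y => Wu u y) (Wuv u v) v)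
    (hcWu : Continuous fun p : ℝ × ℝ => Wu p.1 p.2)
    (hcWv : Continuous fun p : ℝ × ℝ => Wv p.1 p.2)
    (hcWuu : Continuous fun p : ℝ × ℝ => Wuu p.1 p.2)
    (hcWvv : Continuous fun p : ℝ × ℝ => Wvv p.1 p.2)
    (hcWuv : Continuous fun p : ℝ × ℝ => Wuv p.1 p.2)
    (hpuu : ∀ u v : ℝ, 0 ≤ u → 0 ≤ v → 0 < Wuu u v)
    (hpvv : ∀ u v : ℝ, 0 ≤ u → 0 ≤ v → 0 < Wvv u v)
    (hpuv : ∀ u v : ℝ, 0 ≤ u → 0 ≤ v → 0 ≤ Wuv u v)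
    (hrad : ∀ C : ℝ, ∃ R : ℝ, ∀ u v : ℝ, 0 ≤ u → 0 ≤ v → R ≤ u + v → C ≤ W u v) :
    ∃ ubar vbar : ℝ, 0 ≤ ubar ∧ 0 ≤ vbar ∧
      (∀ u v : ℝ, ubar ≤ u → 0 ≤ v → 0 < Wu u v) ∧
      (∀ u v : ℝ, 0 ≤ u → vbar ≤ v → 0 < Wv u v) :=
  stmt1_general W Wu Wv Wuu Wvv Wuv hWu hWv hWuu hWvv hWuv hpuu hpvv hpuv hrad
end

section
/- Let f, g : ℝ≥0² → ℝ be continuous and suppose there exists v₀ ≥ 0 such that liminf_{u→∞} f(u, v₀) > 0 and lim_{u→∞} |f(u,v₀)/g(u,v₀)| = ∞. Then there is no C² function W : ℝ≥0² → ℝ≥0 satisfying all of: (i) there exists K̄ > 0 such that ∂W/∂u·f + ∂W/∂v·g ≤ 0 whenever u+v ≥ K̄; (ii) ∂²W/∂u² > 0, ∂²W/∂v² > 0, ∂²W/∂u∂v ≥ 0; (iii) W(u,v) → ∞ as u+v → ∞; (iv) for every fixed v, sup_{u ≥ ū} |∂W/∂v(u,v)/∂W/∂u(u,v)| < ∞,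 where ū is such that ∂W/∂u > 0 for u ≥ ū. -/
/-! Along the line `v = v₀` with `u` large, `W_u > 0` and `f > 0`, so the decrease condition
`W_u f + W_v g ≤ 0` forces `|f / g| ≤ |W_v / W_u|`. Since `|f / g| → ∞`, the level-set slope
`|W_v / W_u|` is unbounded on that line, contradicting (iv). -/

open Filter

lemma abs_div_le_abs_div_of_mul_add_mul_nonpos {a b x y : ℝ} (ha : 0 < a) (hx : 0 ≤ x)
    (h : a * x + b * y ≤ 0) : |x / y| ≤ |b / a| := by
  rcases eq_or_ne y 0 with rfl | hy
  · simp
  rw [abs_div, abs_div, abs_of_nonneg hx, abs_of_pos ha, div_le_div_iff₀ (abs_pos.2 hy) ha]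
  calc x * a = a * x := mul_comm _ _
    _ ≤ -(b * y) := by linarith
    _ ≤ |b| * |y| := (neg_le_abs _).trans (abs_mul _ _).le

theorem stmt5_general
    (f g : ℝ → ℝ → ℝ)
    (v₀ : ℝ) (hv₀ : 0 ≤ v₀)
    (hliminf : ∃ ε > (0 : ℝ), ∃ U : ℝ, ∀ u : ℝ, U ≤ u → ε ≤ f u v₀)
    (hratio : Tendsto (fun u : ℝ => |f u v₀ / g u v₀|) atTop atTop) :
    ¬ ∃ W Wu Wv Wuu Wvv Wuv : ℝ → ℝ → ℝ,
      (∀ u v : ℝ, 0 ≤ u → 0 ≤ v → 0 ≤ W u v) ∧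
      (∀ u v : ℝ, 0 ≤ u → 0 ≤ v → HasDerivAt (fun x => W x v) (Wu u v) u) ∧
      (∀ u v : ℝ, 0 ≤ u → 0 ≤ v → HasDerivAt (fun y => W u y) (Wv u v) v) ∧
      (∀ u v : ℝ, 0 ≤ u → 0 ≤ v → HasDerivAt (fun x => Wu x v) (Wuu u v) u) ∧
      (∀ u v : ℝ, 0 ≤ u → 0 ≤ v → HasDerivAt (fun y => Wv u y) (Wvv u v) v) ∧
      (∀ u v : ℝ, 0 ≤ u → 0 ≤ v → HasDerivAt (fun y => Wu u y) (Wuv u v) v) ∧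
      (Continuous fun p : ℝ × ℝ => Wuu p.1 p.2) ∧
      (Continuous fun p : ℝ × ℝ => Wvv p.1 p.2) ∧
      (Continuous fun p : ℝ × ℝ => Wuv p.1 p.2) ∧
      -- (i) decrease along reaction trajectories at large total concentration
      (∃ K > (0 : ℝ), ∀ u v : ℝ, 0 ≤ u → 0 ≤ v → K ≤ u + v →
        Wu u v * f u v + Wv u v * g u v ≤ 0) ∧
      -- (ii) convexity
      (∀ u v : ℝ, 0 ≤ u → 0 ≤ v → 0 < Wuu u v ∧ 0 < Wvv u v ∧ 0 ≤ Wuv u v) ∧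
      -- (iii) radial unboundedness
      (∀ C : ℝ, ∃ R : ℝ, ∀ u v : ℝ, 0 ≤ u → 0 ≤ v → R ≤ u + v → C ≤ W u v) ∧
      -- (iv) bounded level-set tangent slopes
      (∃ ubar : ℝ, 0 ≤ ubar ∧ (∀ u v : ℝ, ubar ≤ u → 0 ≤ v → 0 < Wu u v) ∧
        ∀ v : ℝ, 0 ≤ v → ∃ C : ℝ, ∀ u : ℝ, ubar ≤ u → |Wv u v / Wu u v| ≤ C) := by
  rintro ⟨W, Wu, Wv, Wuu, Wvv, Wuv, -, -, -, -, -, -, -, -, -,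
    ⟨K, hK, hdec⟩, -, -, ⟨ubar, -, hWu_pos, hslope⟩⟩
  obtain ⟨ε, hε, U, hfU⟩ := hliminf
  obtain ⟨C, hC⟩ := hslope v₀ hv₀
  have hratio_le_slope : ∀ᶠ u in atTop, |f u v₀ / g u v₀| ≤ |Wv u v₀ / Wu u v₀| := by
    filter_upwards [eventually_ge_atTop ubar, eventually_ge_atTop U, eventually_ge_atTop K]
      with u hu hUu hKu
    exact abs_div_le_abs_div_of_mul_add_mul_nonpos (hWu_pos u v₀ hu hv₀)
      (hε.le.trans (hfU u hUu)) (hdec u v₀ (hK.le.trans hKu) hv₀ (by linarith))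
  have hslope_unbounded := tendsto_atTop_mono' atTop hratio_le_slope hratio
  obtain ⟨u, hu, hCu⟩ :=
    ((eventually_ge_atTop ubar).and (hslope_unbounded.eventually_gt_atTop C)).exists
  exact (hCu.trans_le (hC u hu)).false

/-- if `liminf_{u→∞} f(u,v₀) > 0` and `|f/g|(·,v₀) → ∞`, then no
Lyapunov-like function exists: no C² nonnegative `W` on the quadrant can satisfy
(i) decrease along reactions at large total concentration, (ii) convexity,
(iii) radial unboundedness, and (iv) bounded level-set tangent slopes. -/
theorem stmt5
    (f g : ℝ → ℝ → ℝ)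
    (hfc : Continuous fun p : ℝ × ℝ => f p.1 p.2)
    (hgc : Continuous fun p : ℝ × ℝ => g p.1 p.2)
    (v₀ : ℝ) (hv₀ : 0 ≤ v₀)
    (hliminf : ∃ ε > (0 : ℝ), ∃ U : ℝ, ∀ u : ℝ, U ≤ u → ε ≤ f u v₀)
    (hratio : Tendsto (fun u : ℝ => |f u v₀ / g u v₀|) atTop atTop) :
    ¬ ∃ W Wu Wv Wuu Wvv Wuv : ℝ → ℝ → ℝ,
      (∀ u v : ℝ, 0 ≤ u → 0 ≤ v → 0 ≤ W u v) ∧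
      (∀ u v : ℝ, 0 ≤ u → 0 ≤ v → HasDerivAt (fun x => W x v) (Wu u v) u) ∧
      (∀ u v : ℝ, 0 ≤ u → 0 ≤ v → HasDerivAt (fun y => W u y) (Wv u v) v) ∧
      (∀ u v : ℝ, 0 ≤ u → 0 ≤ v → HasDerivAt (fun x => Wu x v) (Wuu u v) u) ∧
      (∀ u v : ℝ, 0 ≤ u → 0 ≤ v → HasDerivAt (fun y => Wv u y) (Wvv u v) v) ∧
      (∀ u v : ℝ, 0 ≤ u → 0 ≤ v → HasDerivAt (fun y => Wu u y) (Wuv u v) v) ∧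
      (Continuous fun p : ℝ × ℝ => Wuu p.1 p.2) ∧
      (Continuous fun p : ℝ × ℝ => Wvv p.1 p.2) ∧
      (Continuous fun p : ℝ × ℝ => Wuv p.1 p.2) ∧
      -- (i) decrease along reaction trajectories at large total concentration
      (∃ K > (0 : ℝ), ∀ u v : ℝ, 0 ≤ u → 0 ≤ v → K ≤ u + v →
        Wu u v * f u v + Wv u v * g u v ≤ 0) ∧
      -- (ii) convexity
      (∀ u v : ℝ, 0 ≤ u → 0 ≤ v → 0 < Wuu u v ∧ 0 < Wvv u v ∧ 0 ≤ Wuv u v) ∧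
      -- (iii) radial unboundedness
      (∀ C : ℝ, ∃ R : ℝ, ∀ u v : ℝ, 0 ≤ u → 0 ≤ v → R ≤ u + v → C ≤ W u v) ∧
      -- (iv) bounded level-set tangent slopes
      (∃ ubar : ℝ, 0 ≤ ubar ∧ (∀ u v : ℝ, ubar ≤ u → 0 ≤ v → 0 < Wu u v) ∧
        ∀ v : ℝ, 0 ≤ v → ∃ C : ℝ, ∀ u : ℝ, ubar ≤ u → |Wv u v / Wu u v| ≤ C) :=
  stmt5_general f g v₀ hv₀ hliminf hratio
end

section
/- Let f(u,v) = a − u + u²v and g(u,v) = b − u²v with a, b > 0, and let W(u,v) = u + 2v + c/(u+1) + 1/(v+1). If c > max{(2a+4b)/a, 2a+4b}, then there exists K̄ > 0 such that for all u, v ≥ 0 with u + v ≥ K̄, one has (1 − c/(u+1)²)·(a − u + u²v) + (2 − 1/(v+1)²)·(b − u²v) ≤ 0. -/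
/-!
Write `p = 1/(u+1)²`, `q = 1/(v+1)²`. Expanding, the rate equals
`a + 2b - u + c p (u - a) - u²v (1 - q) - c p u²v - q b`, and every term after `c p (u - a)` is
nonpositive. Since `p u ≤ 1/4`, the rate is at most `a + 2b + c/4 - u`, negative for large `u`.
For bounded `u` we use `1 - 2u ≤ p ≤ 1` and `v q ≤ 1/4` instead: the rate is at most
`-δ + L u - (v - 1/4) u²` with `δ = c a - a - 2b > 0` and `L = c + 2 c a`, a concave quadratic
in `u` whose maximum `-δ + L² / (4 (v - 1/4))` is negative once `v` is large.
-/

/-- `∇W · (f, g)` for `W(u,v) = u + 2v + c/(u+1) + 1/(v+1)` and the Schnakenberg kinetics. -/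
noncomputable def schnakenbergLyapunovRate (a b c u v : ℝ) : ℝ :=
  (1 - c / (u + 1) ^ 2) * (a - u + u ^ 2 * v) + (2 - 1 / (v + 1) ^ 2) * (b - u ^ 2 * v)

lemma mul_one_div_add_one_sq_le (x : ℝ) : x * (1 / (x + 1) ^ 2) ≤ 1 / 4 := by
  rcases eq_or_ne (x + 1) 0 with hx | hx
  · simp [hx]
  rw [mul_one_div, div_le_div_iff₀ (by positivity) (by norm_num)]
  linarith [sq_nonneg (x - 1)]

lemma one_div_add_one_sq_le_one {x : ℝ} (hx : 0 ≤ x) : 1 / (x + 1) ^ 2 ≤ 1 := by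
  rw [div_le_one (by positivity)]
  nlinarith

lemma one_sub_two_mul_le_one_div_add_one_sq {x : ℝ} (hx : 0 ≤ x) :
    1 - 2 * x ≤ 1 / (x + 1) ^ 2 := by
  rw [le_div_iff₀ (by positivity)]
  nlinarith [mul_nonneg (sq_nonneg x) hx]

lemma neg_add_mul_sub_mul_sq_nonpos {δ L w : ℝ} (hw : 0 < w) (hdisc : L ^ 2 ≤ 4 * w * δ) (x : ℝ) :
    -δ + L * x - w * x ^ 2 ≤ 0 := by
  nlinarith [sq_nonneg (2 * w * x - L)]

section

variable {a b c u v : ℝ}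

lemma schnakenbergLyapunovRate_eq (a b c u v : ℝ) :
    schnakenbergLyapunovRate a b c u v =
      a + 2 * b - u + c * (1 / (u + 1) ^ 2) * (u - a) - u ^ 2 * v * (1 - 1 / (v + 1) ^ 2)
        - c * (1 / (u + 1) ^ 2) * (u ^ 2 * v) - 1 / (v + 1) ^ 2 * b := by
  unfold schnakenbergLyapunovRate
  ring

lemma schnakenbergLyapunovRate_le_sub (ha : 0 ≤ a) (hb : 0 ≤ b) (hc : 0 ≤ c) (hv : 0 ≤ v) :
    schnakenbergLyapunovRate a b c u v ≤ a + 2 * b + c / 4 - u := by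
  set p := 1 / (u + 1) ^ 2
  set q := 1 / (v + 1) ^ 2
  have hp : 0 ≤ p := by positivity
  have hq : 0 ≤ q := by positivity
  have hpu : c * (u * p) ≤ c * (1 / 4) :=
    mul_le_mul_of_nonneg_left (mul_one_div_add_one_sq_le u) hc
  have hq1 : 0 ≤ 1 - q := sub_nonneg.2 (one_div_add_one_sq_le_one hv)
  rw [schnakenbergLyapunovRate_eq]
  linarith [mul_nonneg (mul_nonneg hc hp) ha, mul_nonneg (mul_nonneg (sq_nonneg u) hv) hq1,
    mul_nonneg (mul_nonneg hc hp) (mul_nonneg (sq_nonneg u) hv), mul_nonneg hq hb]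

lemma schnakenbergLyapunovRate_le_quadratic (ha : 0 ≤ a) (hb : 0 ≤ b) (hc : 0 ≤ c) (hu : 0 ≤ u)
    (hv : 0 ≤ v) : schnakenbergLyapunovRate a b c u v ≤
      -(c * a - (a + 2 * b)) + (c + 2 * c * a) * u - (v - 1 / 4) * u ^ 2 := by
  set p := 1 / (u + 1) ^ 2
  set q := 1 / (v + 1) ^ 2
  have hp : 0 ≤ p := by positivity
  have hq : 0 ≤ q := by positivity
  have hp1 : c * (p * u) ≤ c * u :=
    mul_le_mul_of_nonneg_left (mul_le_of_le_one_left hu (one_div_add_one_sq_le_one hu)) hc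
  have hp2 : c * a * (1 - 2 * u) ≤ c * a * p :=
    mul_le_mul_of_nonneg_left (one_sub_two_mul_le_one_div_add_one_sq hu) (mul_nonneg hc ha)
  have hqv : u ^ 2 * (v * q) ≤ u ^ 2 * (1 / 4) :=
    mul_le_mul_of_nonneg_left (mul_one_div_add_one_sq_le v) (sq_nonneg u)
  rw [schnakenbergLyapunovRate_eq]
  linarith [mul_nonneg (mul_nonneg hc hp) (mul_nonneg (sq_nonneg u) hv), mul_nonneg hq hb]

end

/-- for the Schnakenberg kinetics `f = a − u + u²v`,
`g = b − u²v` and the LLF `W(u,v) = u + 2v + c/(u+1) + 1/(v+1)` with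
`c > max{(2a+4b)/a, 2a+4b}`, there is `K̄ > 0` such that whenever `u+v ≥ K̄`
on the quadrant, `∇W · (f,g) ≤ 0`. -/
theorem stmt10 (a b c : ℝ) (ha : 0 < a) (hb : 0 < b)
    (hc : max ((2 * a + 4 * b) / a) (2 * a + 4 * b) < c) :
    ∃ K > (0 : ℝ), ∀ u v : ℝ, 0 ≤ u → 0 ≤ v → K ≤ u + v →
      (1 - c / (u + 1) ^ 2) * (a - u + u ^ 2 * v) +
        (2 - 1 / (v + 1) ^ 2) * (b - u ^ 2 * v) ≤ 0 := by
  have hca : 2 * a + 4 * b < c * a := (div_lt_iff₀ ha).1 (lt_of_le_of_lt (le_max_left _ _) hc)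
  have hc0 : 0 < c := by nlinarith
  set δ := c * a - (a + 2 * b)
  set L := c + 2 * c * a
  have hδ : 0 < δ := by linarith
  refine ⟨a + 2 * b + c / 4 + 1 / 4 + L ^ 2 / (4 * δ), by positivity, fun u v hu hv hK => ?_⟩
  change schnakenbergLyapunovRate a b c u v ≤ 0
  rcases le_total (a + 2 * b + c / 4) u with hu_large | hu_small
  · linarith [schnakenbergLyapunovRate_le_sub (u := u) ha.le hb.le hc0.le hv]
  · have hv_large : L ^ 2 / (4 * δ) ≤ v - 1 / 4 := by linarith
    have hw : 0 < v - 1 / 4 := lt_of_lt_of_le (by positivity) hv_large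
    have hdisc : L ^ 2 ≤ 4 * (v - 1 / 4) * δ := by
      rw [div_le_iff₀ (by positivity)] at hv_large
      linarith
    exact (schnakenbergLyapunovRate_le_quadratic ha.le hb.le hc0.le hu hv).trans
      (neg_add_mul_sub_mul_sq_nonpos hw hdisc u)
end

section
/- Let f(u,v) = u(a₁ − b₁u + c₁v) and g(u,v) = v(a₂ + b₂u − c₂v) with a₁, a₂ ∈ ℝ, b₁, b₂, c₁, c₂ > 0, and b₂c₁ > b₁c₂ (strong mutualism). Then there is no Lyapunov-like function for this system; more precisely, there is no C² function W : ℝ≥0² → ℝ≥0 that is radially unbounded, has ∂²W/∂u², ∂²W/∂v² > 0 and ∂²W/∂u∂v ≥ 0, has eventual positivity of partial derivatives (∂W/∂u > 0 for u ≥ ū, ∂W/∂v > 0 for v ≥ v̄), and satisfies ∂W/∂u·f + ∂W/∂v·g ≤ 0 whenever u+v ≥ K̄ for some K̄ > 0. -/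
open Filter Topology

/-- for the strongly mutualistic kinetics
`f(u,v) = u(a₁ − b₁u + c₁v)`, `g(u,v) = v(a₂ + b₂u − c₂v)` with
`b₁, b₂, c₁, c₂ > 0` and `b₂c₁ > b₁c₂`, no Lyapunov-like function exists. -/
theorem stmt11 (a₁ a₂ b₁ b₂ c₁ c₂ : ℝ)
    (hb₁ : 0 < b₁) (hb₂ : 0 < b₂) (hc₁ : 0 < c₁) (hc₂ : 0 < c₂)
    (hstrong : b₁ * c₂ < b₂ * c₁) :
    ¬ ∃ W Wu Wv Wuu Wvv Wuv : ℝ → ℝ → ℝ,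
      (∀ u v : ℝ, 0 ≤ u → 0 ≤ v → 0 ≤ W u v) ∧
      (∀ u v : ℝ, 0 ≤ u → 0 ≤ v → HasDerivAt (fun x => W x v) (Wu u v) u) ∧
      (∀ u v : ℝ, 0 ≤ u → 0 ≤ v → HasDerivAt (fun y => W u y) (Wv u v) v) ∧
      (∀ u v : ℝ, 0 ≤ u → 0 ≤ v → HasDerivAt (fun x => Wu x v) (Wuu u v) u) ∧
      (∀ u v : ℝ, 0 ≤ u → 0 ≤ v → HasDerivAt (fun y => Wv u y) (Wvv u v) v) ∧
      (∀ u v : ℝ, 0 ≤ u → 0 ≤ v → HasDerivAt (fun y => Wu u y) (Wuv u v) v) ∧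
      -- radial unboundedness
      (∀ C : ℝ, ∃ R : ℝ, ∀ u v : ℝ, 0 ≤ u → 0 ≤ v → R ≤ u + v → C ≤ W u v) ∧
      -- convexity
      (∀ u v : ℝ, 0 ≤ u → 0 ≤ v → 0 < Wuu u v ∧ 0 < Wvv u v ∧ 0 ≤ Wuv u v) ∧
      -- eventual positivity of the partial derivatives
      (∃ ubar vbar : ℝ, 0 ≤ ubar ∧ 0 ≤ vbar ∧
        (∀ u v : ℝ, ubar ≤ u → 0 ≤ v → 0 < Wu u v) ∧
        (∀ u v : ℝ, 0 ≤ u → vbar ≤ v → 0 < Wv u v)) ∧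
      -- decrease along reaction trajectories at large total concentration
      (∃ K > (0 : ℝ), ∀ u v : ℝ, 0 ≤ u → 0 ≤ v → K ≤ u + v →
        Wu u v * (u * (a₁ - b₁ * u + c₁ * v)) +
          Wv u v * (v * (a₂ + b₂ * u - c₂ * v)) ≤ 0) := by
  rintro ⟨W, Wu, Wv, Wuu, Wvv, Wuv, hW0, hdu, hdv, hduu, hdvv, hduv, hrad, hconv,
    ⟨ubar, vbar, hubar, hvbar, hWu, hWv⟩, K, hK, hdec⟩
  -- choose a large u on the nullcline of g
  set u : ℝ := max (max ubar K) (max ((1 - a₂) / b₂) ((c₂ - a₁ * c₂ - c₁ * a₂) / (b₂ * c₁ - b₁ * c₂))) with hu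
  have hu1 : ubar ≤ u := le_trans (le_max_left _ _) (le_max_left _ _)
  have hu2 : K ≤ u := le_trans (le_max_right _ _) (le_max_left _ _)
  have hu3 : (1 - a₂) / b₂ ≤ u := le_trans (le_max_left _ _) (le_max_right _ _)
  have hu4 : (c₂ - a₁ * c₂ - c₁ * a₂) / (b₂ * c₁ - b₁ * c₂) ≤ u :=
    le_trans (le_max_right _ _) (le_max_right _ _)
  have hupos : 0 < u := lt_of_lt_of_le hK hu2
  have h1 : 1 ≤ a₂ + b₂ * u := by
    have := (div_le_iff₀ hb₂).mp hu3
    linarith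
  have hsd : 0 < b₂ * c₁ - b₁ * c₂ := by linarith
  have h2 : c₂ ≤ a₁ * c₂ + c₁ * a₂ + (b₂ * c₁ - b₁ * c₂) * u := by
    have := (div_le_iff₀ hsd).mp hu4
    linarith
  set v : ℝ := (a₂ + b₂ * u) / c₂ with hv
  have hvpos : 0 < v := div_pos (by linarith) hc₂
  have hcv : c₂ * v = a₂ + b₂ * u := by
    rw [hv]; field_simp
  have hfpos : 0 < u * (a₁ - b₁ * u + c₁ * v) := by
    apply mul_pos hupos
    have : c₁ * v = (c₁ * a₂ + c₁ * b₂ * u) / c₂ := by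
      field_simp [hv]; linarith [hcv]
    rw [this]
    have hx : b₁ * u - a₁ < (c₁ * a₂ + c₁ * b₂ * u) / c₂ := by
      rw [lt_div_iff₀ hc₂]; nlinarith
    nlinarith
  have hWupos : 0 < Wu u v := hWu u v hu1 hvpos.le
  have hg0 : v * (a₂ + b₂ * u - c₂ * v) = 0 := by rw [hcv]; ring
  have := hdec u v hupos.le hvpos.le (by linarith)
  rw [hg0] at this
  nlinarith [mul_pos hWupos hfpos]
end

section
/- The function V(u,v) = (u+1)²(v+1)² is a global Lyapunov function for the planar system u' = uv(u−v)(u+1) − δu, v' = uv(v−u)(v+1) − δv with δ > 0 on the nonnegative quadrant: its derivative along trajectories satisfies ∇V·(f,g) = −2δ(u+1)(v+1)[u(v+1) + v(u+1)] ≤ 0 for all u,v ≥ 0, with equality only at points where u = v = 0 or the bracketed term vanishes. -/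
/-! The gradient of `V` is `(2(u+1)(v+1)², 2(u+1)²(v+1))`, so `∇V·(f,g)` is `2(u+1)(v+1)` times
`(v+1) f + (u+1) g`. In that combination the cubic interaction terms of `f` and `g` cancel by
antisymmetry, and only the decay terms `-δu`, `-δv` survive; on the quadrant these give a negative
multiple of `u(v+1) + v(u+1) ≥ 0`. -/

section Weinberger

variable {R : Type*} [CommRing R]

theorem weinberger_interaction_cancel (u v : R) :
    (v + 1) * (u * v * (u - v) * (u + 1)) + (u + 1) * (u * v * (v - u) * (v + 1)) = 0 := by
  ring

theorem weinberger_lyapunov_deriv_eq (δ u v : R) :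
    (2 * (u + 1) * (v + 1) ^ 2) * (u * v * (u - v) * (u + 1) - δ * u) +
        (2 * (u + 1) ^ 2 * (v + 1)) * (u * v * (v - u) * (v + 1) - δ * v) =
      -2 * δ * (u + 1) * (v + 1) * (u * (v + 1) + v * (u + 1)) := by
  linear_combination 2 * (u + 1) * (v + 1) * weinberger_interaction_cancel u v

end Weinberger

section Quadrant

variable {δ u v : ℝ}

theorem weinberger_decay_nonpos (hδ : 0 ≤ δ) (hu : 0 ≤ u) (hv : 0 ≤ v) :
    -2 * δ * (u + 1) * (v + 1) * (u * (v + 1) + v * (u + 1)) ≤ 0 := by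
  have : 0 ≤ δ * (u + 1) * (v + 1) * (u * (v + 1) + v * (u + 1)) := by positivity
  linarith

theorem weinberger_decay_eq_zero_iff (hδ : δ ≠ 0) (hu : 0 ≤ u) (hv : 0 ≤ v) :
    -2 * δ * (u + 1) * (v + 1) * (u * (v + 1) + v * (u + 1)) = 0 ↔
      u * (v + 1) + v * (u + 1) = 0 := by
  have hu' : u + 1 ≠ 0 := by positivity
  have hv' : v + 1 ≠ 0 := by positivity
  simp only [mul_eq_zero, hδ, hu', hv', neg_eq_zero, two_ne_zero, or_false, false_or]

end Quadrant

/-- `V(u,v) = (u+1)²(v+1)²` is a global Lyapunov function for the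
Weinberger kinetics: along trajectories
`∇V·(f,g) = −2δ(u+1)(v+1)[u(v+1) + v(u+1)] ≤ 0` on the quadrant, with equality
only where the bracketed term vanishes (equivalently `u = v = 0`). -/
theorem stmt13 (δ : ℝ) (hδ : 0 < δ) :
    ∀ u v : ℝ, 0 ≤ u → 0 ≤ v →
      (2 * (u + 1) * (v + 1) ^ 2) * (u * v * (u - v) * (u + 1) - δ * u) +
          (2 * (u + 1) ^ 2 * (v + 1)) * (u * v * (v - u) * (v + 1) - δ * v) =
        -2 * δ * (u + 1) * (v + 1) * (u * (v + 1) + v * (u + 1)) ∧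
      (2 * (u + 1) * (v + 1) ^ 2) * (u * v * (u - v) * (u + 1) - δ * u) +
          (2 * (u + 1) ^ 2 * (v + 1)) * (u * v * (v - u) * (v + 1) - δ * v) ≤ 0 ∧
      ((2 * (u + 1) * (v + 1) ^ 2) * (u * v * (u - v) * (u + 1) - δ * u) +
          (2 * (u + 1) ^ 2 * (v + 1)) * (u * v * (v - u) * (v + 1) - δ * v) = 0 ↔
        u * (v + 1) + v * (u + 1) = 0) := by
  intro u v hu hv
  rw [weinberger_lyapunov_deriv_eq]
  exact ⟨rfl, weinberger_decay_nonpos hδ.le hu hv, weinberger_decay_eq_zero_iff hδ.ne' hu hv⟩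
end

section
/- Let C be the unique real root of C³ + 2C² − 32 = 0. For any δ, ε > 0, every point (u,v) with u, v ≥ 0 on the curve uv(u+v+2) = 8 + δ + ε satisfies u + v ≥ C. -/
open Filter Topology

/-! By AM–GM, `uv ≤ s²/4` with `s = u + v`, so a nonnegative point on the curve has
`s³ + 2s² ≥ 4(8 + δ + ε) > 32 = C³ + 2C²`; since `x ↦ x³ + 2x²` is strictly increasing
on `x ≥ 0`, this forces `s > C`. -/

section

variable {R : Type*} [CommRing R] [LinearOrder R] [IsStrictOrderedRing R]

lemma cube_add_two_mul_sq_lt_of_lt {s t : R} (hs : 0 ≤ s) (hst : s < t) :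
    s ^ 3 + 2 * s ^ 2 < t ^ 3 + 2 * t ^ 2 := by
  have hsq : s ^ 2 < t ^ 2 := pow_lt_pow_left₀ hst hs two_ne_zero
  have hcube : s ^ 3 < t ^ 3 := pow_lt_pow_left₀ hst hs three_ne_zero
  linarith

lemma four_mul_mul_add_add_two_le {u v : R} (hu : 0 ≤ u) (hv : 0 ≤ v) :
    4 * (u * v * (u + v + 2)) ≤ (u + v) ^ 3 + 2 * (u + v) ^ 2 := by
  have hs : 0 ≤ u + v + 2 := by positivity
  calc 4 * (u * v * (u + v + 2)) = 4 * u * v * (u + v + 2) := by ring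
    _ ≤ (u + v) ^ 2 * (u + v + 2) := mul_le_mul_of_nonneg_right (four_mul_le_sq_add u v) hs
    _ = (u + v) ^ 3 + 2 * (u + v) ^ 2 := by ring

end

theorem stmt15_general (C : ℝ) (hC : C ^ 3 + 2 * C ^ 2 - 32 = 0)
    (δ ε : ℝ) (hδ : 0 < δ) (hε : 0 < ε) :
    ∀ u v : ℝ, 0 ≤ u → 0 ≤ v → u * v * (u + v + 2) = 8 + δ + ε → C ≤ u + v := by
  intro u v hu hv hcurve
  by_contra! hlt
  have hupper : (u + v) ^ 3 + 2 * (u + v) ^ 2 < 32 := by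
    linarith [cube_add_two_mul_sq_lt_of_lt (add_nonneg hu hv) hlt]
  have hlower := four_mul_mul_add_add_two_le hu hv
  rw [hcurve] at hlower
  linarith

/-- let `C` be the unique real root of `C³ + 2C² − 32 = 0`. For any
`δ, ε > 0`, every nonnegative point on the curve `uv(u+v+2) = 8 + δ + ε`
satisfies `u + v ≥ C`. -/
theorem stmt15 (C : ℝ) (hC : C ^ 3 + 2 * C ^ 2 - 32 = 0)
    (hCuniq : ∀ x : ℝ, x ^ 3 + 2 * x ^ 2 - 32 = 0 → x = C)
    (δ ε : ℝ) (hδ : 0 < δ) (hε : 0 < ε) :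
    ∀ u v : ℝ, 0 ≤ u → 0 ≤ v → u * v * (u + v + 2) = 8 + δ + ε → C ≤ u + v :=
  stmt15_general C hC δ ε hδ hε
end
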